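/- Let v₁ = (1, 0) and v₂ = (1/2, 1 + √3/2) in ℝ², and let Λ = {a·v₁ + b·v₂ : a, b ∈ ℤ}. Then: (i) ⋃_{p∈Λ} closedBall(p, 1) = ℝ², i.e. the closed unit balls centered at the lattice points cover the plane; (ii) det(Λ) = |v₁.1·v₂.2 − v₁.2·v₂.1| = 1 + √3/2; and (iii) v₁ ∈ Λ, v₁ ≠ 0 and ‖v₁‖ ≤ 1 (so every disk of the family contains the centers of at least two other disks of the family). -/

import Mathlib

open Metric

noncomputable section

/-- The Euclidean plane. -/
abbrev Pt := EuclideanSpace ℝ (Fin 2)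

/-- The lattice generated by `v₁` and `v₂`. -/
def lattice (v₁ v₂ : Pt) : Set Pt := {p | ∃ a b : ℤ, p = (a : ℝ) • v₁ + (b : ℝ) • v₂}

/-- The determinant of the lattice generated by `v₁` and `v₂`. -/
def latticeDet (v₁ v₂ : Pt) : ℝ := |v₁ 0 * v₂ 1 - v₁ 1 * v₂ 0|

/-- The vector `(1, 0)`. -/
def v₁ : Pt := !₂[1, 0]

/-- The vector `(1/2, 1 + √3/2)`. -/
def v₂ : Pt := !₂[1 / 2, 1 + Real.sqrt 3 / 2]

/-! The lattice consists of rows of unit-spaced points at heights `b * h`, `h = 1 + √3/2`,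
consecutive rows shifted by `1/2`. Every point of the plane lies at an offset
`(s, y) ∈ [0,1] × [0,h]` from some lattice point `p`, and this cell is covered by the unit disks
around `p`, `p + v₁` and `p + v₂`. Since `(h - 1)² = 3/4`, the unit circles around `0` and `v₂`
meet at `(0, 1)` and `(1/2, √3/2)`, so these two disks cover the half cell `[0,1/2] × [0,h]`;
the other half is its mirror image. -/

lemma two_disks_cover_half_cell {h s y : ℝ} (hh : (h - 1) ^ 2 = 3 / 4) (h1 : 1 ≤ h)
    (hs0 : 0 ≤ s) (hs : s ≤ 1 / 2) (hy0 : 0 ≤ y) (hy : y ≤ h) :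
    s ^ 2 + y ^ 2 ≤ 1 ∨ (1 / 2 - s) ^ 2 + (h - y) ^ 2 ≤ 1 := by
  refine or_iff_not_imp_left.2 fun hfar => ?_
  have hexpand : (1 / 2 - s) ^ 2 + (h - y) ^ 2 - 1 = s ^ 2 - s + (1 - y) * (2 * h - 1 - y) := by
    linear_combination hh
  -- Outside the unit disk around `0` we have `1 - y² < s²`, and `(1 - y)(2h - 1 - y) ≤ 1 - y²`
  -- once `h - 1 ≤ y ≤ 1`, so the right-hand side of `hexpand` is below `2s² - s ≤ 0`.
  rcases le_total y 1 with hy1 | hy1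
  · have hy_low : h - 1 ≤ y := by nlinarith
    nlinarith [mul_le_mul_of_nonneg_left (show 2 * h - 1 - y ≤ 1 + y by linarith) (sub_nonneg.2 hy1)]
  · nlinarith [mul_nonneg (sub_nonneg.2 hy1) (show 0 ≤ 2 * h - 1 - y by linarith)]

lemma three_disks_cover_cell {h s y : ℝ} (hh : (h - 1) ^ 2 = 3 / 4) (h1 : 1 ≤ h)
    (hs0 : 0 ≤ s) (hs1 : s ≤ 1) (hy0 : 0 ≤ y) (hy : y ≤ h) :
    s ^ 2 + y ^ 2 ≤ 1 ∨ (s - 1) ^ 2 + y ^ 2 ≤ 1 ∨ (s - 1 / 2) ^ 2 + (y - h) ^ 2 ≤ 1 := by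
  rcases le_total s (1 / 2) with hs | hs
  · rcases two_disks_cover_half_cell hh h1 hs0 hs hy0 hy with h | h
    · exact Or.inl h
    · right; right; linarith
  · rcases two_disks_cover_half_cell hh h1 (s := 1 - s) (by linarith) (by linarith) hy0 hy with h | h
    · right; left; linarith
    · right; right; linarith

lemma latticePoint_apply_zero (a b : ℝ) : (a • v₁ + b • v₂) 0 = a + b / 2 := by
  simp [v₁, v₂]; ring

lemma latticePoint_apply_one (a b : ℝ) : (a • v₁ + b • v₂) 1 = b * (1 + √3 / 2) := by
  simp [v₁, v₂]

lemma mem_closedBall_latticePoint_iff (x : Pt) (a b : ℝ) :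
    x ∈ closedBall (a • v₁ + b • v₂) 1 ↔
      (x 0 - (a + b / 2)) ^ 2 + (x 1 - b * (1 + √3 / 2)) ^ 2 ≤ 1 := by
  rw [mem_closedBall, EuclideanSpace.dist_eq, Real.sqrt_le_one, Fin.sum_univ_two,
    latticePoint_apply_zero, latticePoint_apply_one, Real.dist_eq, Real.dist_eq, sq_abs, sq_abs]

lemma exists_int_add_fract_coords {h : ℝ} (hh : 0 < h) (X Y : ℝ) :
    ∃ a b : ℤ, ∃ s y : ℝ, 0 ≤ s ∧ s ≤ 1 ∧ 0 ≤ y ∧ y ≤ h ∧ X = a + b / 2 + s ∧ Y = b * h + y := by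
  set b := ⌊Y / h⌋
  refine ⟨⌊X - b / 2⌋, b, Int.fract (X - b / 2), Int.fract (Y / h) * h, Int.fract_nonneg _,
    (Int.fract_lt_one _).le, by positivity, mul_le_of_le_one_left hh.le (Int.fract_lt_one _).le,
    ?_, ?_⟩
  · linarith [Int.floor_add_fract (X - b / 2)]
  · rw [← add_mul, Int.floor_add_fract, div_mul_cancel₀ _ hh.ne']

theorem iUnion_closedBall_lattice_eq_univ : ⋃ p ∈ lattice v₁ v₂, closedBall p 1 = Set.univ := by
  refine Set.eq_univ_of_forall fun x => ?_
  have hcov : ∀ a b : ℤ, x ∈ closedBall ((a : ℝ) • v₁ + (b : ℝ) • v₂) 1 →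
      x ∈ ⋃ p ∈ lattice v₁ v₂, closedBall p 1 :=
    fun a b hx => Set.mem_iUnion₂.2 ⟨_, ⟨a, b, rfl⟩, hx⟩
  have hh : (1 + √3 / 2 - 1) ^ 2 = (3 / 4 : ℝ) := by
    rw [add_sub_cancel_left, div_pow, Real.sq_sqrt (by norm_num)]; norm_num
  obtain ⟨a, b, s, y, hs0, hs1, hy0, hyh, hX, hY⟩ :=
    exists_int_add_fract_coords (h := 1 + √3 / 2) (by positivity) (x 0) (x 1)
  simp only [mem_closedBall_latticePoint_iff, hX, hY] at hcov
  rcases three_disks_cover_cell hh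
    (le_add_of_nonneg_right (by positivity)) hs0 hs1 hy0 hyh with hd | hd | hd
  · exact hcov a b (by linear_combination hd)
  · exact hcov (a + 1) b (by push_cast; linear_combination hd)
  · exact hcov a (b + 1) (by push_cast; linear_combination hd)

lemma latticeDet_v₁_v₂ : latticeDet v₁ v₂ = 1 + √3 / 2 := by
  simp [latticeDet, v₁, v₂, abs_of_nonneg (by positivity : (0:ℝ) ≤ 1 + √3 / 2)]

/-- The unit disks centered at the points of the lattice generated by `(1,0)` and
`(1/2, 1+√3/2)` cover the plane, the lattice determinant equals `1 + √3/2`, and `v₁` is a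
nonzero lattice vector of norm at most 1 (so every disk of the family contains the centers of
at least two other disks of the family). -/
theorem optimal_constrained_lattice_covering :
    (⋃ p ∈ lattice v₁ v₂, closedBall p 1) = Set.univ ∧
    latticeDet v₁ v₂ = 1 + Real.sqrt 3 / 2 ∧
    (v₁ ∈ lattice v₁ v₂ ∧ v₁ ≠ 0 ∧ ‖v₁‖ ≤ 1) := by
  refine ⟨iUnion_closedBall_lattice_eq_univ, latticeDet_v₁_v₂, ⟨1, 0, by simp⟩, ?_, ?_⟩
  · intro h
    simpa [v₁] using congrArg (· 0) h
  · simp [v₁, EuclideanSpace.norm_eq]
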